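/- arXiv:2309.13530 — 2 statements merged into one kernel-verified Lean document; each statement's English description precedes it below -/
import Mathlib

section
/- Let T be a weighted shift with nonzero weight sequence (a_n)_{n≥0} satisfying |a_0| ≥ |a_1| ≥ |a_2| ≥ ⋯, and let B = {S ∈ A_T : ‖S‖ ≤ 1} be the closed unit ball of A_T. Then every S ∈ A_T with ‖S‖ = ‖S e_0‖ = 1 is an extreme point of B. In particular, for every n ≥ 1 the normalized power T_n := T^n / ‖T^n‖ is an extreme point of B. -/
noncomputable section

/-- `H = ℓ²(ℕ)` over `ℂ`. -/
abbrev H : Type := lp (fun _ : ℕ => ℂ) 2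

/-- The standard orthonormal basis of `ℓ²(ℕ)`. -/
def e (n : ℕ) : H := lp.single 2 n 1

/-- `A_T`: the operator-norm closure of the polynomials in `T` with zero constant term. -/
def polyAlg (T : H →L[ℂ] H) : Set (H →L[ℂ] H) :=
  closure ((NonUnitalAlgebra.adjoin ℂ {T} : NonUnitalSubalgebra ℂ (H →L[ℂ] H)) :
    Set (H →L[ℂ] H))

/-- The closed unit ball of `A_T`. -/
def unitBall (T : H →L[ℂ] H) : Set (H →L[ℂ] H) :=
  {S : H →L[ℂ] H | S ∈ polyAlg T ∧ ‖S‖ ≤ 1}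

/-!
Since the weights are nonzero, `T^n e₀` is a nonzero multiple of `eₙ`, so `e₀` is a cyclic vector
for `T`. Every element of `A_T` commutes with `T` and is therefore determined by its value at `e₀`:
`S ↦ S e₀` is an injective real-affine map from the unit ball of `A_T` to the unit ball of `H`.
It sends `S` to a unit vector, an extreme point of the ball of the strictly convex space `H`, and
extreme points pull back along injective affine maps.

For the powers, `T^n` maps `eⱼ` to `aⱼ ⋯ aⱼ₊ₙ₋₁ eⱼ₊ₙ`; as `|aⱼ|` decreases, the largest of these
coefficients is the one at `j = 0`, whence `‖T^n‖ = ‖T^n e₀‖`.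
-/

open scoped InnerProductSpace

theorem mem_extremePoints_of_injOn {𝕜 E F : Type*} [Ring 𝕜] [PartialOrder 𝕜] [IsOrderedRing 𝕜]
    [AddCommGroup E] [Module 𝕜 E] [AddCommGroup F] [Module 𝕜 F]
    (f : E →ᵃ[𝕜] F) {s : Set E} {t : Set F} (hst : Set.MapsTo f s t) (hf : Set.InjOn f s)
    {x : E} (hx : x ∈ s) (hfx : f x ∈ Set.extremePoints 𝕜 t) : x ∈ Set.extremePoints 𝕜 s :=
  ⟨hx, fun _ hx₁ _ hx₂ hseg => hf hx₁ hx <| hfx.2 (hst hx₁) (hst hx₂) <|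
    image_openSegment 𝕜 f _ _ ▸ Set.mem_image_of_mem f hseg⟩

theorem NonUnitalAlgebra.pow_mem_adjoin_singleton {R A : Type*} [CommSemiring R] [Semiring A]
    [Module R A] [IsScalarTower R A A] [SMulCommClass R A A] (x : A) {n : ℕ} (hn : n ≠ 0) :
    x ^ n ∈ adjoin R {x} := by
  obtain ⟨m, rfl⟩ := Nat.exists_eq_succ_of_ne_zero hn
  induction m with
  | zero => simp [self_mem_adjoin_singleton]
  | succ m ih => rw [pow_succ]; exact mul_mem (ih m.succ_ne_zero) (self_mem_adjoin_singleton R x)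

theorem ContinuousLinearMap.eq_of_commute_of_dense_span_orbit {R M : Type*} [Semiring R]
    [TopologicalSpace M] [AddCommMonoid M] [Module R M] [T2Space M] {T A B : M →L[R] M} {v : M}
    (hv : Dense (Submodule.span R (Set.range fun n : ℕ => (T ^ n) v) : Set M))
    (hA : Commute A T) (hB : Commute B T) (hAB : A v = B v) : A = B := by
  refine ContinuousLinearMap.ext_on hv ?_
  rintro _ ⟨n, rfl⟩
  calc A ((T ^ n) v) = (T ^ n) (A v) := congrArg (· v) (hA.pow_right n).eq
    _ = (T ^ n) (B v) := by rw [hAB]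
    _ = B ((T ^ n) v) := congrArg (· v) (hB.pow_right n).eq.symm

theorem ContinuousLinearMap.opNorm_le_of_hilbertBasis_apply_eq_smul {ι 𝕜 E F : Type*} [RCLike 𝕜]
    [NormedAddCommGroup E] [InnerProductSpace 𝕜 E] [NormedAddCommGroup F] [InnerProductSpace 𝕜 F]
    (b : HilbertBasis ι 𝕜 E) {f : ι → F} (hf : Orthonormal 𝕜 f) {A : E →L[𝕜] F} {c : ι → 𝕜}
    (hA : ∀ i, A (b i) = c i • f i) {C : ℝ} (hC0 : 0 ≤ C) (hC : ∀ i, ‖c i‖ ≤ C) : ‖A‖ ≤ C := by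
  refine A.opNorm_le_bound hC0 fun x => ?_
  have hsum : HasSum (fun i => (⟪b i, x⟫_𝕜 * c i) • f i) (A x) := by
    simpa [b.repr_apply_apply, hA, smul_smul] using A.hasSum (b.hasSum_repr x)
  refine le_of_tendsto' hsum.norm fun s => ?_
  have hsq : ‖∑ i ∈ s, (⟪b i, x⟫_𝕜 * c i) • f i‖ ^ 2 ≤ (C * ‖x‖) ^ 2 :=
    calc ‖∑ i ∈ s, (⟪b i, x⟫_𝕜 * c i) • f i‖ ^ 2 = ∑ i ∈ s, ‖⟪b i, x⟫_𝕜‖ ^ 2 * ‖c i‖ ^ 2 := by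
          simpa [mul_pow] using hf.orthogonalFamily.norm_sum (fun i => ⟪b i, x⟫_𝕜 * c i) s
      _ ≤ ∑ i ∈ s, ‖⟪b i, x⟫_𝕜‖ ^ 2 * C ^ 2 := by gcongr; exact hC _
      _ ≤ ‖x‖ ^ 2 * C ^ 2 := by
          rw [← Finset.sum_mul]; gcongr; exact b.orthonormal.sum_inner_products_le x
      _ = (C * ‖x‖) ^ 2 := by ring
  exact (pow_le_pow_iff_left₀ (norm_nonneg _) (by positivity) two_ne_zero).1 hsq

theorem pow_apply_of_apply_eq_smul {R M : Type*} [CommSemiring R] [TopologicalSpace M]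
    [AddCommMonoid M] [Module R M] {T : M →L[R] M} {a : ℕ → R} {v : ℕ → M}
    (hT : ∀ n, T (v n) = a n • v (n + 1)) (n j : ℕ) :
    (T ^ n) (v j) = (∏ i ∈ Finset.range n, a (j + i)) • v (j + n) := by
  induction n with
  | zero => simp
  | succ n ih =>
    rw [pow_succ', mul_apply_eq_comp, ih, map_smul, hT, smul_smul,
      Finset.prod_range_succ, ← add_assoc]

theorem commute_of_mem_polyAlg {T S : H →L[ℂ] H} (hS : S ∈ polyAlg T) : Commute S T := by
  have hadj : (NonUnitalAlgebra.adjoin ℂ {T} : Set (H →L[ℂ] H)) ⊆ Set.centralizer {T} := by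
    rw [← NonUnitalSubalgebra.coe_centralizer ℂ]
    exact NonUnitalAlgebra.adjoin_le (by simp [Set.mem_centralizer_iff])
  exact (Set.mem_centralizer_iff.1 (closure_minimal hadj (Set.isClosed_centralizer _) hS) T
    rfl).symm

theorem smul_pow_mem_polyAlg (T : H →L[ℂ] H) (c : ℝ) {n : ℕ} (hn : n ≠ 0) :
    c • T ^ n ∈ polyAlg T := by
  show (c : ℂ) • T ^ n ∈ polyAlg T
  exact subset_closure <| Submodule.smul_mem (NonUnitalAlgebra.adjoin ℂ {T}).toSubmodule _ <|
    NonUnitalAlgebra.pow_mem_adjoin_singleton T hn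

def stdHilbertBasis : HilbertBasis ℕ ℂ H := ⟨LinearIsometryEquiv.refl ℂ H⟩

theorem coe_stdHilbertBasis : ⇑stdHilbertBasis = e := by
  funext n
  exact (stdHilbertBasis.repr_symm_single n).symm

theorem orthonormal_e : Orthonormal ℂ e := coe_stdHilbertBasis ▸ stdHilbertBasis.orthonormal

section WeightedShift

variable {a : ℕ → ℂ} {T : H →L[ℂ] H}

theorem dense_span_orbit_e_zero (hT : ∀ n, T (e n) = a n • e (n + 1)) (ha : ∀ n, a n ≠ 0) :
    Dense (Submodule.span ℂ (Set.range fun n : ℕ => (T ^ n) (e 0)) : Set H) := by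
  refine (Submodule.dense_iff_topologicalClosure_eq_top.2
    (coe_stdHilbertBasis ▸ stdHilbertBasis.dense_span)).mono <| Submodule.span_le.2 ?_
  rintro _ ⟨n, rfl⟩
  have hn := pow_apply_of_apply_eq_smul hT n 0
  rw [zero_add] at hn
  rw [← inv_smul_smul₀ (Finset.prod_ne_zero_iff.2 fun i _ => ha (0 + i)) (e n), ← hn]
  exact Submodule.smul_mem _ _ (Submodule.subset_span ⟨n, rfl⟩)

theorem eq_of_mem_polyAlg_of_apply_e_zero_eq (hT : ∀ n, T (e n) = a n • e (n + 1))
    (ha : ∀ n, a n ≠ 0) {A B : H →L[ℂ] H}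
    (hA : A ∈ polyAlg T) (hB : B ∈ polyAlg T) (hAB : A (e 0) = B (e 0)) : A = B :=
  ContinuousLinearMap.eq_of_commute_of_dense_span_orbit (dense_span_orbit_e_zero hT ha)
    (commute_of_mem_polyAlg hA) (commute_of_mem_polyAlg hB) hAB

theorem mem_extremePoints_unitBall (hT : ∀ n, T (e n) = a n • e (n + 1))
    (ha : ∀ n, a n ≠ 0) {S : H →L[ℂ] H} (hS : S ∈ polyAlg T)
    (hS1 : ‖S‖ ≤ 1) (hS0 : ‖S (e 0)‖ = 1) : S ∈ Set.extremePoints ℝ (unitBall T) := by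
  let ev : (H →L[ℂ] H) →ᵃ[ℝ] H :=
    ((ContinuousLinearMap.apply ℂ H (e 0)).toLinearMap.restrictScalars ℝ).toAffineMap
  refine mem_extremePoints_of_injOn ev (t := Metric.closedBall 0 1) ?_
    (fun A hA B hB => eq_of_mem_polyAlg_of_apply_e_zero_eq hT ha hA.1 hB.1) ⟨hS, hS1⟩ ?_
  · intro A hA
    have := A.le_opNorm (e 0)
    rw [orthonormal_e.norm_eq_one, mul_one] at this
    simpa [ev] using this.trans hA.2
  · exact StrictConvexSpace.sphere_subset_extremePoints_closedBall 0 one_ne_zero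
      (by simpa [ev] using hS0)

theorem opNorm_pow_eq_norm_pow_apply_e_zero (hT : ∀ n, T (e n) = a n • e (n + 1))
    (hdec : ∀ n, ‖a (n + 1)‖ ≤ ‖a n‖) (n : ℕ) :
    ‖T ^ n‖ = ‖(T ^ n) (e 0)‖ := by
  have hpow := pow_apply_of_apply_eq_smul hT n
  have hmax : ∀ j, ‖∏ i ∈ Finset.range n, a (j + i)‖ ≤ ‖∏ i ∈ Finset.range n, a (0 + i)‖ := by
    have hanti : Antitone fun n => ‖a n‖ := antitone_nat_of_succ_le hdec
    intro j
    simp only [norm_prod]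
    exact Finset.prod_le_prod (fun i _ => norm_nonneg _) fun i _ =>
      hanti (show 0 + i ≤ j + i by omega)
  have hle : ‖T ^ n‖ ≤ ‖(T ^ n) (e 0)‖ := by
    rw [hpow, norm_smul, orthonormal_e.norm_eq_one, mul_one]
    refine ContinuousLinearMap.opNorm_le_of_hilbertBasis_apply_eq_smul stdHilbertBasis
      (orthonormal_e.comp _ (add_left_injective n)) (fun j => ?_) (norm_nonneg _) hmax
    rw [coe_stdHilbertBasis, hpow]; rfl
  exact hle.antisymm (by simpa [orthonormal_e.norm_eq_one] using (T ^ n).le_opNorm (e 0))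

end WeightedShift

/-- For a weighted shift `T` with nonzero weights satisfying `|a_0| ≥ |a_1| ≥ ⋯`:
every `S ∈ A_T` with `‖S‖ = ‖S e_0‖ = 1` is an extreme point of the closed unit ball of
`A_T`; in particular each normalized power `T^n / ‖T^n‖` (`n ≥ 1`) is an extreme point. -/
theorem extreme_points_of_unit_ball (a : ℕ → ℂ) (ha : ∀ n, a n ≠ 0)
    (hdec : ∀ n, ‖a (n + 1)‖ ≤ ‖a n‖)
    (T : H →L[ℂ] H) (hT : ∀ n, T (e n) = a n • e (n + 1)) :
    (∀ S ∈ polyAlg T, ‖S‖ = 1 → ‖S (e 0)‖ = 1 →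
       S ∈ Set.extremePoints ℝ (unitBall T)) ∧
    (∀ n : ℕ, 1 ≤ n →
       (‖T ^ n‖⁻¹ : ℝ) • (T ^ n) ∈ Set.extremePoints ℝ (unitBall T)) := by
  refine ⟨fun S hS hS1 hS0 => mem_extremePoints_unitBall hT ha hS hS1.le hS0, fun n hn => ?_⟩
  have hnorm := opNorm_pow_eq_norm_pow_apply_e_zero hT hdec n
  have hpos : 0 < ‖T ^ n‖ := by
    rw [hnorm, pow_apply_of_apply_eq_smul hT, norm_smul, orthonormal_e.norm_eq_one, mul_one]
    exact norm_pos_iff.2 (Finset.prod_ne_zero_iff.2 fun i _ => ha _)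
  refine mem_extremePoints_unitBall hT ha (smul_pow_mem_polyAlg T _ (by omega)) ?_ ?_
  · rw [norm_smul, norm_inv, norm_norm, inv_mul_cancel₀ hpos.ne']
  · rw [smul_apply, norm_smul, norm_inv, norm_norm, ← hnorm, inv_mul_cancel₀ hpos.ne']
end
end

section
/- Let (a_n)_{n≥0} be a sequence of nonzero complex numbers such that the weighted shift T e_n = a_n e_{n+1} is quasinilpotent (its spectral radius is 0). Let S ∈ A_T be a nonzero element and k ≥ 1 be such that ⟨S e_0, e_j⟩ = 0 for all 1 ≤ j < k and ⟨S e_0, e_k⟩ ≠ 0. If S factors as S = T^k Q for some Q in the closed unital subalgebra of B(H) generated by T (the unitization of A_T), then the smallest closed two-sided ideal of A_T containing S equals the smallest closed two-sided ideal of A_T containing T^k. In particular this holds whenever S is a polynomial in T whose lowest-order nonvanishing term has degree k. -/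
/-!
Let `B` be the closed unital algebra generated by `T`; it is a commutative Banach algebra. Since
the complement of `σ(T) = {0}` is connected, `σ_B(T) = σ(T)`, so every character of `B` kills `T`.
A character is therefore evaluation at `0` on polynomials in `T`, and by density it coincides on
all of `B` with the continuous functional `X ↦ ⟪e₀, X e₀⟫`. Hence `Q ∈ B` is invertible in `B` as
soon as `⟪e₀, Q e₀⟫ ≠ 0`, and for `S = T^k Q` this is the condition `⟪S e₀, e_k⟫ ≠ 0`, because
`⟪e_k, T^k y⟫` is a multiple of `⟪e₀, y⟫`. Closed ideals of `A_T` are stable under right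
multiplication by `B`, so `S` and `T^k = S Q⁻¹` generate the same closed ideal.
-/

noncomputable section

open scoped InnerProductSpace

/-- The unitization of `A_T`: the operator-norm closure of all polynomials in `T`
(the closed unital subalgebra of `B(H)` generated by `T`). -/
def unitalAlg (T : H →L[ℂ] H) : Set (H →L[ℂ] H) :=
  closure ((Algebra.adjoin ℂ {T} : Subalgebra ℂ (H →L[ℂ] H)) : Set (H →L[ℂ] H))

/-- A closed two-sided ideal of the (non-unital) operator algebra `A_T`. -/
def IsClosedIdeal (T : H →L[ℂ] H) (J : Set (H →L[ℂ] H)) : Prop :=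
  J ⊆ polyAlg T ∧ IsClosed J ∧ (0 : H →L[ℂ] H) ∈ J ∧
  (∀ x ∈ J, ∀ y ∈ J, x + y ∈ J) ∧
  (∀ c : ℂ, ∀ x ∈ J, c • x ∈ J) ∧
  (∀ a ∈ polyAlg T, ∀ x ∈ J, a * x ∈ J ∧ x * a ∈ J)

/-- The smallest closed two-sided ideal of `A_T` containing `S`. -/
def idealGen (T S : H →L[ℂ] H) : Set (H →L[ℂ] H) :=
  ⋂₀ {J : Set (H →L[ℂ] H) | IsClosedIdeal T J ∧ S ∈ J}

open Polynomial WeakDual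

section Elemental

variable {A : Type*} [NormedRing A] [NormedAlgebra ℂ A] [CompleteSpace A]

instance (x : A) : NormedCommRing (Algebra.elemental ℂ x) :=
  { SubringClass.toNormedRing (Algebra.elemental ℂ x) with mul_comm := mul_comm }

theorem spectrum_eq_singleton_zero_of_spectralRadius_eq_zero [Nontrivial A] {x : A}
    (hx : spectralRadius ℂ x = 0) : spectrum ℂ x = {0} := by
  refine (Set.Nonempty.subset_singleton_iff (spectrum.nonempty x)).mp fun z hz => ?_
  by_contra hz0
  exact hz (spectrum.mem_resolventSet_of_spectralRadius_lt (by simpa [hx] using hz0))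

namespace Algebra.elemental

theorem characterSpace_apply_self_eq_zero [Nontrivial A] {x : A} (hx : spectralRadius ℂ x = 0)
    (χ : characterSpace ℂ (elemental ℂ x)) : χ ⟨x, self_mem ℂ x⟩ = 0 := by
  have hσ := spectrum_eq_singleton_zero_of_spectralRadius_eq_zero hx
  have hconn : IsPreconnected (spectrum ℂ x)ᶜ := by
    rw [hσ]
    exact (isConnected_compl_singleton_of_one_lt_rank (by simp) 0).isPreconnected
  have h := CharacterSpace.apply_mem_spectrum χ ⟨x, self_mem ℂ x⟩
  rwa [Subalgebra.spectrum_eq_of_isPreconnected_compl (elemental ℂ x) ⟨x, self_mem ℂ x⟩ hconn,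
    hσ] at h

theorem characterSpace_apply_eq {x : A} (χ : characterSpace ℂ (elemental ℂ x)) (f : A →L[ℂ] ℂ)
    (hf : ∀ p : ℂ[X], f (aeval x p) = aeval (χ ⟨x, self_mem ℂ x⟩) p) (y : elemental ℂ x) :
    χ y = f y := by
  have hdense : Dense {y : elemental ℂ x | (y : A) ∈ adjoin ℂ {x}} := by
    refine Subtype.dense_iff.mpr fun y hy =>
      closure_mono ?_ ((Subalgebra.topologicalClosure_coe _).subset hy)
    exact fun z hz => ⟨⟨z, subset_closure hz⟩, hz, rfl⟩
  refine congrFun (Continuous.ext_on hdense (map_continuous χ)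
    (f.continuous.comp continuous_subtype_val) ?_) y
  intro z (hz : (z : A) ∈ adjoin ℂ {x})
  obtain ⟨p, hp⟩ : ∃ p : ℂ[X], aeval x p = z := by
    simpa [adjoin_singleton_eq_range_aeval] using hz
  have hzp : z = aeval ⟨x, self_mem ℂ x⟩ p :=
    Subtype.ext (by rw [← hp, aeval_subalgebra_coe])
  rw [Function.comp_apply, ← hp, hf, hzp]
  exact (aeval_algHom_apply (CharacterSpace.equivAlgHom χ) _ p).symm

theorem exists_mul_eq_one_of_spectralRadius_eq_zero [Nontrivial A] {x : A}
    (hx : spectralRadius ℂ x = 0) (f : A →L[ℂ] ℂ) (hf : ∀ p : ℂ[X], f (aeval x p) = p.coeff 0)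
    {y : A} (hy : y ∈ elemental ℂ x) (hfy : f y ≠ 0) : ∃ z ∈ elemental ℂ x, y * z = 1 := by
  have hunit : IsUnit (⟨y, hy⟩ : elemental ℂ x) := by
    by_contra h
    obtain ⟨χ, hχ⟩ := CharacterSpace.exists_apply_eq_zero h
    refine hfy ?_
    rwa [characterSpace_apply_eq χ f fun p => by
      rw [hf, characterSpace_apply_self_eq_zero hx χ, coeff_zero_eq_aeval_zero]] at hχ
  exact ⟨_, (hunit.unit⁻¹ : (elemental ℂ x)ˣ).1.2, congrArg Subtype.val hunit.mul_val_inv⟩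

end Algebra.elemental

end Elemental

theorem inner_e_e (m n : ℕ) : ⟪e m, e n⟫_ℂ = if m = n then 1 else 0 := by
  simp [e, lp.inner_single_left, Pi.single_apply]

@[simp]
theorem norm_e (n : ℕ) : ‖e n‖ = 1 := by
  simp [e, lp.norm_single]

instance : Nontrivial H :=
  ⟨⟨e 0, 0, fun h => by simpa [h] using norm_e 0⟩⟩

theorem continuousLinearMap_ext_e {F : Type*} [NormedAddCommGroup F] [NormedSpace ℂ F]
    {f g : H →L[ℂ] F} (h : ∀ n, f (e n) = g (e n)) : f = g :=
  lp.ext_continuousLinearMap ENNReal.ofNat_ne_top fun n => ContinuousLinearMap.ext_ring (h n)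

def matrixEntry (i j : ℕ) : (H →L[ℂ] H) →L[ℂ] ℂ :=
  (innerSL ℂ (e i)).comp (ContinuousLinearMap.apply ℂ H (e j))

theorem matrixEntry_apply (i j : ℕ) (X : H →L[ℂ] H) : matrixEntry i j X = ⟪e i, X (e j)⟫_ℂ :=
  rfl

section WeightedShift

variable {a : ℕ → ℂ} {T : H →L[ℂ] H}

theorem pow_apply_e (hT : ∀ n, T (e n) = a n • e (n + 1)) (j n : ℕ) :
    (T ^ j) (e n) = (∏ i ∈ Finset.range j, a (n + i)) • e (n + j) := by
  induction j with
  | zero => simp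
  | succ j ih =>
    rw [pow_succ', mul_apply_eq_comp, ih, map_smul, hT, smul_smul,
      Finset.prod_range_succ, mul_comm, add_assoc]

theorem inner_e_pow_apply (hT : ∀ n, T (e n) = a n • e (n + 1)) (k : ℕ) (y : H) :
    ⟪e k, (T ^ k) y⟫_ℂ = (∏ i ∈ Finset.range k, a i) * ⟪e 0, y⟫_ℂ := by
  have h : (innerSL ℂ (e k)).comp (T ^ k) = (∏ i ∈ Finset.range k, a i) • innerSL ℂ (e 0) := by
    refine continuousLinearMap_ext_e fun n => ?_
    rcases n with _ | n <;> simp [pow_apply_e hT, inner_e_e]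
  simpa using congrArg (fun f => f y) h

theorem matrixEntry_zero_zero_pow (hT : ∀ n, T (e n) = a n • e (n + 1)) (n : ℕ) :
    matrixEntry 0 0 (T ^ n) = if n = 0 then 1 else 0 := by
  rcases n with _ | n <;> simp [matrixEntry_apply, pow_apply_e hT, inner_e_e]

theorem matrixEntry_zero_zero_aeval (hT : ∀ n, T (e n) = a n • e (n + 1)) (p : ℂ[X]) :
    matrixEntry 0 0 (aeval T p) = p.coeff 0 := by
  simp [aeval_eq_sum_range, map_sum, matrixEntry_zero_zero_pow hT]

theorem matrixEntry_zero_zero_sum_smul_pow_sub (hT : ∀ n, T (e n) = a n • e (n + 1)) {k m : ℕ}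
    (hkm : k ≤ m) (b : ℕ → ℂ) :
    matrixEntry 0 0 (∑ j ∈ Finset.Icc k m, b j • T ^ (j - k)) = b k := by
  rw [map_sum, Finset.sum_eq_single k]
  · simp [matrixEntry_apply]
  · intro j hj hjk
    have hjk' : j - k ≠ 0 := Nat.sub_ne_zero_of_lt ((Finset.mem_Icc.mp hj).1.lt_of_ne' hjk)
    simp [matrixEntry_zero_zero_pow hT, hjk']
  · simp [hkm]

end WeightedShift

theorem sum_Icc_smul_pow_eq_pow_mul {R : Type*} [Semiring R] [Algebra ℂ R] (x : R) (k m : ℕ)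
    (b : ℕ → ℂ) :
    ∑ j ∈ Finset.Icc k m, b j • x ^ j = x ^ k * ∑ j ∈ Finset.Icc k m, b j • x ^ (j - k) := by
  rw [Finset.mul_sum]
  refine Finset.sum_congr rfl fun j hj => ?_
  rw [mul_smul_comm, ← pow_add, Nat.add_sub_cancel' (Finset.mem_Icc.mp hj).1]

section Ideal

variable {T : H →L[ℂ] H}

theorem IsClosedIdeal.mul_mem_of_mem_unitalAlg {J : Set (H →L[ℂ] H)} (hJ : IsClosedIdeal T J)
    {x Q : H →L[ℂ] H} (hx : x ∈ J) (hQ : Q ∈ unitalAlg T) : x * Q ∈ J := by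
  obtain ⟨-, hJc, -, hadd, hsmul, hmul⟩ := hJ
  let R : Subalgebra ℂ (H →L[ℂ] H) :=
    { carrier := {Q | ∀ y ∈ J, y * Q ∈ J}
      mul_mem' := fun hQ hQ' y hy => mul_assoc y _ _ ▸ hQ' _ (hQ y hy)
      add_mem' := fun hQ hQ' y hy => (mul_add y _ _).symm ▸ hadd _ (hQ y hy) _ (hQ' y hy)
      algebraMap_mem' := fun c y hy => by
        simpa [Algebra.algebraMap_eq_smul_one] using hsmul c y hy }
  have hTR : T ∈ R := fun y hy =>
    (hmul T (subset_closure (NonUnitalAlgebra.self_mem_adjoin_singleton ℂ T)) y hy).2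
  have hR : IsClosed (R : Set (H →L[ℂ] H)) := by
    convert isClosed_biInter fun y (_ : y ∈ J) => hJc.preimage (continuous_const_mul y)
    ext
    simp [R]
  exact closure_minimal (Algebra.adjoin_le (Set.singleton_subset_iff.mpr hTR)) hR hQ x hx

theorem idealGen_mul_eq_of_mul_eq_one {X Q U : H →L[ℂ] H} (hQ : Q ∈ unitalAlg T)
    (hU : U ∈ unitalAlg T) (hQU : Q * U = 1) : idealGen T (X * Q) = idealGen T X := by
  refine congrArg Set.sInter (Set.ext fun J => and_congr_right fun hJ =>
    ⟨fun h => ?_, fun h => hJ.mul_mem_of_mem_unitalAlg h hQ⟩)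
  simpa [mul_assoc, hQU] using hJ.mul_mem_of_mem_unitalAlg h hU

end Ideal

theorem idealGen_mul_eq_of_matrixEntry_ne_zero {a : ℕ → ℂ} {T : H →L[ℂ] H}
    (hT : ∀ n, T (e n) = a n • e (n + 1)) (hq : spectralRadius ℂ T = 0) (X : H →L[ℂ] H)
    {Q : H →L[ℂ] H} (hQ : Q ∈ unitalAlg T) (hQ0 : matrixEntry 0 0 Q ≠ 0) :
    idealGen T (X * Q) = idealGen T X := by
  obtain ⟨U, hU, hQU⟩ := Algebra.elemental.exists_mul_eq_one_of_spectralRadius_eq_zero hq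
    (matrixEntry 0 0) (matrixEntry_zero_zero_aeval hT) hQ hQ0
  exact idealGen_mul_eq_of_mul_eq_one hQ hU hQU

theorem ideal_of_factorizable_element_general (a : ℕ → ℂ)
    (T : H →L[ℂ] H) (hT : ∀ n, T (e n) = a n • e (n + 1))
    (hq : spectralRadius ℂ T = 0)
    (S : H →L[ℂ] H)
    (k : ℕ)
    (hk0 : (⟪S (e 0), e k⟫_ℂ) ≠ 0) :
    (∀ Q ∈ unitalAlg T, S = T ^ k * Q → idealGen T S = idealGen T (T ^ k)) ∧
    (∀ (m : ℕ) (b : ℕ → ℂ), k ≤ m → b k ≠ 0 →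
       idealGen T (∑ j ∈ Finset.Icc k m, b j • T ^ j) = idealGen T (T ^ k)) := by
  refine ⟨fun Q hQ hSQ => ?_, fun m b hkm hbk => ?_⟩
  · subst hSQ
    refine idealGen_mul_eq_of_matrixEntry_ne_zero hT hq _ hQ fun h => hk0 ?_
    rw [← inner_conj_symm, mul_apply_eq_comp, inner_e_pow_apply hT, ← matrixEntry_apply, h,
      mul_zero, map_zero]
  · rw [sum_Icc_smul_pow_eq_pow_mul]
    refine idealGen_mul_eq_of_matrixEntry_ne_zero hT hq _ ?_
      (matrixEntry_zero_zero_sum_smul_pow_sub hT hkm b ▸ hbk)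
    exact Subalgebra.sum_mem _ fun j _ =>
      Subalgebra.smul_mem _ (Subalgebra.pow_mem _ (Algebra.elemental.self_mem ℂ T) _) _

/-- Let `T` be a quasinilpotent weighted shift with nonzero weights, and let `S ∈ A_T` be
nonzero with `⟨S e₀, e_j⟩ = 0` for `1 ≤ j < k` and `⟨S e₀, e_k⟩ ≠ 0`. If `S = T^k Q` for
some `Q` in the unitization of `A_T`, then `<S> = <T^k>`; in particular this holds when `S`
is a polynomial in `T` whose lowest-order nonvanishing term has degree `k`. -/
theorem ideal_of_factorizable_element (a : ℕ → ℂ) (ha : ∀ n, a n ≠ 0)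
    (T : H →L[ℂ] H) (hT : ∀ n, T (e n) = a n • e (n + 1))
    (hq : spectralRadius ℂ T = 0)
    (S : H →L[ℂ] H) (hS : S ∈ polyAlg T) (hS0 : S ≠ 0)
    (k : ℕ) (hk : 1 ≤ k)
    (hlow : ∀ j : ℕ, 1 ≤ j → j < k → (⟪S (e 0), e j⟫_ℂ) = 0)
    (hk0 : (⟪S (e 0), e k⟫_ℂ) ≠ 0) :
    (∀ Q ∈ unitalAlg T, S = T ^ k * Q → idealGen T S = idealGen T (T ^ k)) ∧
    (∀ (m : ℕ) (b : ℕ → ℂ), k ≤ m → b k ≠ 0 →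
       idealGen T (∑ j ∈ Finset.Icc k m, b j • T ^ j) = idealGen T (T ^ k)) :=
  ideal_of_factorizable_element_general a T hT hq S k hk0
end
end
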